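/- arXiv:1104.5038 — 2 statements merged into one kernel-verified Lean document; each statement's English description precedes it below -/
import Mathlib

section
/- Let Q be an odd square-zero operator acting as a graded derivation on products of homogeneous operator-valued functions, and let b₋₁ be odd with [Q, b₋₁] = L₋₁ where [L₋₁, A(t)] = A′(t). Define m_ε(A,B)(t) = ∫_{−ε}^{0} [b₋₁, A(t′+t+ε)B(t′+t)] dt′. Then A(t+ε)B(t) − A(t)B(t−ε) = Q m_ε(A,B)(t) + m_ε(QA,B)(t) + (−1)^{|A|} m_ε(A,QB)(t). -/
/-!
Write `X(u) = A(u + t + ε) B(u + t)`. Since `Q` and `b` are odd,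
`Q [b, X] + [b, Q X] = [Q b + b Q, X] = [L, X]`, and the graded Leibniz rule splits
`[b, Q X]` into the two integrands of `m_ε` containing `QA` and `QB`. So the right-hand side is
`∫_{-ε}^0 [L, X(u)] du`, and `[L, X(u)] = X'(u)` because `L` generates translations; the
fundamental theorem of calculus gives `X(0) - X(-ε)`, the left-hand side.
-/

open intervalIntegral

/-- The Lian–Zuckerman type homotopy
`m_ε(A,B)(t) = ∫_{-ε}^{0} [b, A(t'+t+ε) B(t'+t)] dt'`, where `[b, ·]` is the
graded commutator with the odd element `b` and `p` is the parity of `A·B`. -/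
noncomputable def mop {R : Type*} [NormedRing R] [NormedAlgebra ℝ R]
    (b : R) (p : ℕ) (A B : ℝ → R) (ε t : ℝ) : R :=
  ∫ u in (-ε)..0,
    (b * (A (u + t + ε) * B (u + t))
      - (-1 : R) ^ p * ((A (u + t + ε) * B (u + t)) * b))

/-- `[x, y]` with the sign `(-1) ^ p`, where `p` stands for `|x| |y|`; for odd `x` this is `|y|`. -/
def gradedCommutator {R : Type*} [Ring R] (p : ℕ) (x y : R) : R :=
  x * y - (-1) ^ p * (y * x)

section Algebra

variable {R : Type*} [Ring R]

theorem gradedCommutator_add_right (p : ℕ) (x y z : R) :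
    gradedCommutator p x (y + z) = gradedCommutator p x y + gradedCommutator p x z := by
  simp only [gradedCommutator]; noncomm_ring

theorem gradedCommutator_neg_one_pow_mul (p n : ℕ) (x y : R) :
    gradedCommutator p x ((-1) ^ n * y) = (-1) ^ n * gradedCommutator p x y := by
  simp only [gradedCommutator, mul_sub, ← mul_assoc, ((Commute.neg_one_left x).pow_left n).eq,
    ((Commute.neg_one_left ((-1 : R) ^ p)).pow_left n).eq]

theorem gradedCommutator_mul (q : R) (pA pB : ℕ) (a c : R) :
    gradedCommutator (pA + pB) q (a * c)
      = gradedCommutator pA q a * c + (-1) ^ pA * (a * gradedCommutator pB q c) := by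
  rcases Nat.even_or_odd pA with hA | hA <;> rcases Nat.even_or_odd pB with hB | hB <;>
    simp only [gradedCommutator, pow_add, hA.neg_one_pow, hB.neg_one_pow] <;> noncomm_ring

theorem gradedCommutator_odd_homotopy (p : ℕ) (q b x : R) :
    gradedCommutator (p + 1) q (gradedCommutator p b x)
      + gradedCommutator (p + 1) b (gradedCommutator p q x)
      = (q * b + b * q) * x - x * (q * b + b * q) := by
  rcases Nat.even_or_odd p with hp | hp <;>
    simp only [gradedCommutator, pow_succ, hp.neg_one_pow] <;> noncomm_ring

theorem gradedCommutator_homotopy_mul (q b a c : R) (pA pB : ℕ) :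
    gradedCommutator (pA + pB + 1) q (gradedCommutator (pA + pB) b (a * c))
      + gradedCommutator (pA + 1 + pB) b (gradedCommutator pA q a * c)
      + (-1) ^ pA * gradedCommutator (pA + (pB + 1)) b (a * gradedCommutator pB q c)
      = (q * b + b * q) * (a * c) - a * c * (q * b + b * q) := by
  rw [add_right_comm pA 1 pB, ← add_assoc pA pB 1, ← gradedCommutator_neg_one_pow_mul, add_assoc,
    ← gradedCommutator_add_right, ← gradedCommutator_mul, gradedCommutator_odd_homotopy]

end Algebra

@[fun_prop]
theorem Continuous.gradedCommutator {R X : Type*} [Ring R] [TopologicalSpace R]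
    [IsTopologicalRing R] [TopologicalSpace X] {f g : X → R} (p : ℕ)
    (hf : Continuous f) (hg : Continuous g) :
    Continuous fun x => gradedCommutator p (f x) (g x) := by
  unfold _root_.gradedCommutator
  fun_prop

section Analysis

variable {R : Type*} [NormedRing R] [NormedAlgebra ℝ R]

theorem mop_eq_integral (b : R) (p : ℕ) (A B : ℝ → R) (ε t : ℝ) :
    mop b p A B ε t = ∫ u in (-ε)..0, gradedCommutator p b (A (u + t + ε) * B (u + t)) :=
  rfl

variable [CompleteSpace R]

theorem mul_intervalIntegral {f : ℝ → R} {a b : ℝ} (c : R)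
    (hf : IntervalIntegrable f MeasureTheory.volume a b) :
    c * ∫ u in a..b, f u = ∫ u in a..b, c * f u :=
  ((ContinuousLinearMap.mul ℝ R c).intervalIntegral_comp_comm hf).symm

theorem intervalIntegral_mul {f : ℝ → R} {a b : ℝ} (c : R)
    (hf : IntervalIntegrable f MeasureTheory.volume a b) :
    (∫ u in a..b, f u) * c = ∫ u in a..b, f u * c :=
  (((ContinuousLinearMap.mul ℝ R).flip c).intervalIntegral_comp_comm hf).symm

theorem gradedCommutator_intervalIntegral {f : ℝ → R} {a b : ℝ} (p : ℕ) (x : R)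
    (hf : IntervalIntegrable f MeasureTheory.volume a b) :
    gradedCommutator p x (∫ u in a..b, f u) = ∫ u in a..b, gradedCommutator p x (f u) := by
  rw [gradedCommutator, mul_intervalIntegral x hf, intervalIntegral_mul x hf,
    mul_intervalIntegral _ (hf.mul_const x), ← integral_sub (hf.const_mul x)
      ((hf.mul_const x).const_mul _)]
  rfl

theorem integral_commutator_translate {L : R} {A B A' B' : ℝ → R}
    (hA : ∀ s, HasDerivAt A (A' s) s) (hB : ∀ s, HasDerivAt B (B' s) s)
    (hLA : ∀ s, L * A s - A s * L = A' s) (hLB : ∀ s, L * B s - B s * L = B' s) (ε t : ℝ) :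
    ∫ u in (-ε)..0, (L * (A (u + t + ε) * B (u + t)) - A (u + t + ε) * B (u + t) * L)
      = A (t + ε) * B t - A t * B (t - ε) := by
  have hAc : Continuous A := continuous_iff_continuousAt.2 fun s => (hA s).continuousAt
  have hBc : Continuous B := continuous_iff_continuousAt.2 fun s => (hB s).continuousAt
  have hderiv : ∀ u, HasDerivAt (fun u => A (u + t + ε) * B (u + t))
      (L * (A (u + t + ε) * B (u + t)) - A (u + t + ε) * B (u + t) * L) u := by
    intro u
    have hA_shift : HasDerivAt (fun u => A (u + t + ε)) (A' (u + t + ε)) u := by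
      simpa only [add_assoc] using (hA (u + (t + ε))).comp_add_const u (t + ε)
    refine (hA_shift.mul ((hB (u + t)).comp_add_const u t)).congr_deriv ?_
    rw [← hLA, ← hLB]
    noncomm_ring
  rw [integral_eq_sub_of_hasDerivAt (fun u _ => hderiv u)
    ((by fun_prop : Continuous _).intervalIntegrable _ _)]
  simp only [zero_add, neg_add_eq_sub, sub_add_cancel]

theorem mop_homotopy (q b : R) (pA pB : ℕ) {A B : ℝ → R} (hA : Continuous A) (hB : Continuous B)
    (ε t : ℝ) :
    gradedCommutator (pA + pB + 1) q (mop b (pA + pB) A B ε t)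
      + mop b (pA + 1 + pB) (fun s => gradedCommutator pA q (A s)) B ε t
      + (-1) ^ pA * mop b (pA + (pB + 1)) A (fun s => gradedCommutator pB q (B s)) ε t
      = ∫ u in (-ε)..0, ((q * b + b * q) * (A (u + t + ε) * B (u + t))
          - A (u + t + ε) * B (u + t) * (q * b + b * q)) := by
  have int {f : ℝ → R} (hf : Continuous f) : IntervalIntegrable f MeasureTheory.volume (-ε) 0 :=
    hf.intervalIntegrable _ _
  simp only [mop_eq_integral]
  rw [gradedCommutator_intervalIntegral _ _ (int (by fun_prop)),
    mul_intervalIntegral _ (int (by fun_prop)),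
    ← integral_add (int (by fun_prop)) (int (by fun_prop)),
    ← integral_add (int (by fun_prop)) (int (by fun_prop))]
  exact integral_congr fun u _ => gradedCommutator_homotopy_mul q b _ _ pA pB

end Analysis

theorem stmt10_general (R : Type*) [NormedRing R] [NormedAlgebra ℝ R] [CompleteSpace R]
    (Q b L : R) (pA pB : ℕ) (A B A' B' : ℝ → R)
    (hA : ∀ s, HasDerivAt A (A' s) s) (hB : ∀ s, HasDerivAt B (B' s) s)
    (hQb : Q * b + b * Q = L)
    (hLA : ∀ s, L * A s - A s * L = A' s)
    (hLB : ∀ s, L * B s - B s * L = B' s)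
    (ε t : ℝ) :
    A (t + ε) * B t - A t * B (t - ε)
      = (Q * mop b (pA + pB) A B ε t
          - (-1 : R) ^ (pA + pB + 1) * (mop b (pA + pB) A B ε t * Q))
        + mop b (pA + 1 + pB)
            (fun s => Q * A s - (-1 : R) ^ pA * (A s * Q)) B ε t
        + (-1 : R) ^ pA *
            mop b (pA + (pB + 1)) A
              (fun s => Q * B s - (-1 : R) ^ pB * (B s * Q)) ε t := by
  subst hQb
  rw [← integral_commutator_translate hA hB hLA hLB]
  exact (mop_homotopy Q b pA pB (continuous_iff_continuousAt.2 fun s => (hA s).continuousAt)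
    (continuous_iff_continuousAt.2 fun s => (hB s).continuousAt) ε t).symm

/-- regularized homotopy commutativity.  With `Q` odd,
`Q² = 0`, `[Q, b₋₁] = L₋₁` generating translations (`[L₋₁, A(t)] = A′(t)`),
one has
`A(t+ε)B(t) - A(t)B(t-ε) = Q m_ε(A,B)(t) + m_ε(QA,B)(t) + (-1)^{|A|} m_ε(A,QB)(t)`,
where `Q X` denotes the graded commutator `[Q, X]`. -/
theorem stmt10 (R : Type*) [NormedRing R] [NormedAlgebra ℝ R] [CompleteSpace R]
    (Q b L : R) (pA pB : ℕ) (A B A' B' : ℝ → R)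
    (hA : ∀ s, HasDerivAt A (A' s) s) (hB : ∀ s, HasDerivAt B (B' s) s)
    (hA' : Continuous A') (hB' : Continuous B')
    (hQ2 : Q * Q = 0) (hb2 : b * b = 0) (hQb : Q * b + b * Q = L)
    (hLA : ∀ s, L * A s - A s * L = A' s)
    (hLB : ∀ s, L * B s - B s * L = B' s)
    (ε t : ℝ) (hε : 0 < ε) :
    A (t + ε) * B t - A t * B (t - ε)
      = (Q * mop b (pA + pB) A B ε t
          - (-1 : R) ^ (pA + pB + 1) * (mop b (pA + pB) A B ε t * Q))
        + mop b (pA + 1 + pB)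
            (fun s => Q * A s - (-1 : R) ^ pA * (A s * Q)) B ε t
        + (-1 : R) ^ pA *
            mop b (pA + (pB + 1)) A
              (fun s => Q * B s - (-1 : R) ^ pB * (B s * Q)) ε t :=
  stmt10_general R Q b L pA pB A B A' B' hA hB hQb hLA hLB ε t
end

section
/- Under the hypotheses of the regularized setting (Q odd square-zero derivation, [Q,b₋₁]=L₋₁ generating translations), define (A,B)_ρ(t) = A(t+ρ)B(t) and n′_{ρ,α₁,α₂}(A,B,C)(t) = (−1)^{|A|} A(t+ρ) ∫_{α₂}^{ρ−α₁} [b₋₁, B(t′+t)] dt′ C(t). Then A(ρ+t)B(ρ−α₁+t)C(t) − A(ρ+t)B(α₂+t)C(t) = Q n′(A,B,C)(t) + n′(QA,B,C)(t) + (−1)^{|A|} n′(A,QB,C)(t) + (−1)^{|A|+|B|} n′(A,B,QC)(t), where n′ = n′_{ρ,α₁,α₂}. -/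
open intervalIntegral

/-- The trilinear operation
`n′_{ρ,α₁,α₂}(A,B,C)(t) = (-1)^{|A|} A(t+ρ) (∫_{α₂}^{ρ-α₁} [b, B(t'+t)] dt') C(t)`,
where `[b, ·]` is the graded commutator with the odd element `b` and `pB` is
the parity of `B` (`pA` that of `A`). -/
noncomputable def nop {R : Type*} [NormedRing R] [NormedAlgebra ℝ R]
    (b : R) (pA pB : ℕ) (A B C : ℝ → R) (ρ α₁ α₂ t : ℝ) : R :=
  (-1 : R) ^ pA *
    (A (t + ρ) *
      ((∫ u in α₂..(ρ - α₁),
          (b * B (u + t) - (-1 : R) ^ pB * (B (u + t) * b))) * C t))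

/-- Pointwise (integrand-level) identity: the `Q`-supercommutator of `[b, X]`
plus the `[b, QX]` term gives `[L, X] = X'`. -/
lemma auxB {R : Type*} [Ring R] (Q b L X X' δ : R)
    (hδ : δ = 1 ∨ δ = -1) (hQb : Q * b + b * Q = L) (hX : L * X - X * L = X') :
    Q * (b * X - δ * (X * b))
      + ((b * (Q * X - δ * (X * Q)) - δ * -1 * ((Q * X - δ * (X * Q)) * b))
      + δ * ((b * X - δ * (X * b)) * Q)) = X' := by
  rw [← hX, ← hQb]
  rcases hδ with h | h <;> subst h <;> noncomm_ring

/-- Outer algebraic identity. -/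
lemma auxOuter {R : Type*} [Ring R] (a c I J Q Bρ B₂ ε δ γ : R)
    (hε : ε = 1 ∨ ε = -1) (hδ : δ = 1 ∨ δ = -1) (hγ : γ = 1 ∨ γ = -1)
    (hJ : J = Bρ - B₂ - Q * I - δ * (I * Q)) :
    a * Bρ * c - a * B₂ * c
      = (Q * (ε * (a * (I * c)))
          - ε * δ * γ * -1 * (ε * (a * (I * c)) * Q))
        + ε * -1 * ((Q * a - ε * (a * Q)) * (I * c))
        + ε * (ε * (a * (J * c)))
        + ε * δ * (ε * (a * (I * (Q * c - γ * (c * Q))))) := by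
  subst hJ
  rcases hε with h | h <;> subst h <;>
    rcases hδ with h | h <;> subst h <;>
      rcases hγ with h | h <;> subst h <;> noncomm_ring

/-- regularized homotopy associativity (Proposition 3.2, without
the `m`-correction): with `Q` odd square-zero, `[Q, b₋₁] = L₋₁` and
`[L₋₁, X(t)] = X′(t)`, for `0 < α₁, α₂ < ρ` one has
`A(ρ+t)B(ρ-α₁+t)C(t) - A(ρ+t)B(α₂+t)C(t)
 = Q n′(A,B,C)(t) + n′(QA,B,C)(t) + (-1)^{|A|} n′(A,QB,C)(t)
   + (-1)^{|A|+|B|} n′(A,B,QC)(t)`,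
where `Q X` is the graded commutator `[Q, X]`. -/
theorem stmt11 (R : Type*) [NormedRing R] [NormedAlgebra ℝ R] [CompleteSpace R]
    (Q b L : R) (pA pB pC : ℕ) (A B C A' B' C' : ℝ → R)
    (hA : ∀ s, HasDerivAt A (A' s) s) (hB : ∀ s, HasDerivAt B (B' s) s)
    (hC : ∀ s, HasDerivAt C (C' s) s)
    (hB' : Continuous B')
    (hQ2 : Q * Q = 0) (hb2 : b * b = 0) (hQb : Q * b + b * Q = L)
    (hLA : ∀ s, L * A s - A s * L = A' s)
    (hLB : ∀ s, L * B s - B s * L = B' s)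
    (hLC : ∀ s, L * C s - C s * L = C' s)
    (ρ α₁ α₂ t : ℝ) (h₁ : 0 < α₁) (h₂ : 0 < α₂) (h₁ρ : α₁ < ρ) (h₂ρ : α₂ < ρ - α₁) :
    A (ρ + t) * B (ρ - α₁ + t) * C t - A (ρ + t) * B (α₂ + t) * C t
      = (Q * nop b pA pB A B C ρ α₁ α₂ t
          - (-1 : R) ^ (pA + pB + pC + 1) * (nop b pA pB A B C ρ α₁ α₂ t * Q))
        + nop b (pA + 1) pB
            (fun s => Q * A s - (-1 : R) ^ pA * (A s * Q)) B C ρ α₁ α₂ t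
        + (-1 : R) ^ pA *
            nop b pA (pB + 1) A
              (fun s => Q * B s - (-1 : R) ^ pB * (B s * Q)) C ρ α₁ α₂ t
        + (-1 : R) ^ (pA + pB) *
            nop b pA pB A B
              (fun s => Q * C s - (-1 : R) ^ pC * (C s * Q)) ρ α₁ α₂ t := by
  have hsgn : ∀ n : ℕ, ((-1 : R) ^ n = 1 ∨ (-1 : R) ^ n = -1) :=
    fun n => n.even_or_odd.imp Even.neg_one_pow Odd.neg_one_pow
  have hBc : Continuous B := by
    have hd : Differentiable ℝ B := fun s => (hB s).differentiableAt
    exact hd.continuous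
  have hBt : ∀ u : ℝ, HasDerivAt (fun v => B (v + t)) (B' (u + t)) u := fun u => by
    exact (hB (u + t)).comp_add_const u t
  have hBct : Continuous fun u : ℝ => B (u + t) :=
    hBc.comp (continuous_id.add continuous_const)
  have lmul : ∀ (r : R) (F : ℝ → R), Continuous F →
      r * (∫ u in α₂..(ρ - α₁), F u) = ∫ u in α₂..(ρ - α₁), r * F u := fun r F hF => by
    simpa using ((ContinuousLinearMap.mul ℝ R r).intervalIntegral_comp_comm
      (hF.intervalIntegrable _ _)).symm
  have rmul : ∀ (r : R) (F : ℝ → R), Continuous F →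
      (∫ u in α₂..(ρ - α₁), F u) * r = ∫ u in α₂..(ρ - α₁), F u * r := fun r F hF => by
    simpa using (((ContinuousLinearMap.mul ℝ R).flip r).intervalIntegral_comp_comm
      (hF.intervalIntegrable _ _)).symm
  set f : ℝ → R := fun u => b * B (u + t) - (-1 : R) ^ pB * (B (u + t) * b) with hf
  set g : ℝ → R := fun u =>
    b * (Q * B (u + t) - (-1 : R) ^ pB * (B (u + t) * Q))
      - (-1 : R) ^ (pB + 1) * ((Q * B (u + t) - (-1 : R) ^ pB * (B (u + t) * Q)) * b)
    with hg
  have hfc : Continuous f := by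
    rw [hf]; fun_prop
  have hgc : Continuous g := by
    rw [hg]; fun_prop
  set I : R := ∫ u in α₂..(ρ - α₁), f u with hI
  set J : R := ∫ u in α₂..(ρ - α₁), g u with hJ
  have hkey : Q * I + (J + (-1 : R) ^ pB * (I * Q))
      = B (ρ - α₁ + t) - B (α₂ + t) := by
    rw [hI, hJ, lmul Q f hfc, rmul Q f hfc,
      lmul ((-1 : R) ^ pB) (fun u => f u * Q) (hfc.mul continuous_const),
      ← intervalIntegral.integral_add (hgc.intervalIntegrable _ _)
        ((show Continuous (fun u => (-1 : R) ^ pB * (f u * Q)) from continuous_const.mul (hfc.mul continuous_const)).intervalIntegrable _ _),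
      ← intervalIntegral.integral_add ((show Continuous (fun u => Q * f u) from continuous_const.mul hfc).intervalIntegrable _ _)
        ((show Continuous (fun u => g u + (-1 : R) ^ pB * (f u * Q)) from hgc.add (continuous_const.mul (hfc.mul continuous_const))).intervalIntegrable _ _)]
    have hpt : ∀ u : ℝ, Q * f u + (g u + (-1 : R) ^ pB * (f u * Q)) = B' (u + t) := by
      intro u
      rw [hf, hg]
      simpa only [pow_succ] using
        auxB Q b L (B (u + t)) (B' (u + t)) ((-1 : R) ^ pB) (hsgn pB) hQb (hLB (u + t))
    rw [intervalIntegral.integral_congr (g := fun u => B' (u + t)) (fun u _ => hpt u)]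
    exact intervalIntegral.integral_eq_sub_of_hasDerivAt (fun u _ => hBt u)
      ((hB'.comp (continuous_id.add continuous_const)).intervalIntegrable _ _)
  have hJval : J = B (ρ - α₁ + t) - B (α₂ + t) - Q * I - (-1 : R) ^ pB * (I * Q) := by
    rw [← hkey]; abel
  simp only [nop]
  rw [show t + ρ = ρ + t from add_comm t ρ]
  simp only [← hf, ← hg]
  simp only [← hI, ← hJ]
  simp only [pow_add, pow_one]
  exact auxOuter (A (ρ + t)) (C t) I J Q (B (ρ - α₁ + t)) (B (α₂ + t))
    ((-1 : R) ^ pA) ((-1 : R) ^ pB) ((-1 : R) ^ pC)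
    (hsgn pA) (hsgn pB) (hsgn pC) hJval
end
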